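/- arXiv:2303.06496 — 2 statements merged into one kernel-verified Lean document; each statement's English description precedes it below -/
import Mathlib

section
/- Let Q_1, …, Q_J be d×d Hermitian unitary complex matrices such that every pair Q_i, Q_j either commutes or anticommutes, let λ_1, …, λ_J be nonnegative reals, and let L_j(A) = λ_j(Q_j A Q_j − A). Then the exponential of the endomorphism ∑_{j=1}^{J} L_j of the space of d×d complex matrices equals the composition N_J ∘ ⋯ ∘ N_1, where N_j(A) = (1 − p_j) A + p_j Q_j A Q_j and p_j = (1 − e^{−2λ_j})/2. -/
open Matrix

attribute [local instance] Matrix.frobeniusNormedAddCommGroup Matrix.frobeniusNormedSpace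

instance matrixCLMIsTopologicalRing (d : ℕ) :
    IsTopologicalRing (Matrix (Fin d) (Fin d) ℂ →L[ℂ] Matrix (Fin d) (Fin d) ℂ) :=
  @NonUnitalSeminormedRing.toIsTopologicalRing _
    (@ContinuousLinearMap.toNormedRing ℂ _ _ _ _).toNonUnitalNormedRing.toNonUnitalSeminormedRing

/-!
Each generator is `λ • (S - 1)` with `S A = Q A Q` an involution of matrix space, so
`e = (1 - S) / 2` is idempotent and `exp (-2λ • e) = 1 + (e^{-2λ} - 1) • e`, which is the Pauli
channel with `p = (1 - e^{-2λ}) / 2`. Since `Q_i Q_j = ± Q_j Q_i`, the sign cancels in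
`Q_i Q_j A Q_j Q_i`, so the superoperators commute and the exponential of the sum is the
composition of the channels.
-/

open NormedSpace
open scoped Nat

section BanachAlgebra

variable {𝕂 𝔸 : Type*} [RCLike 𝕂] [NormedRing 𝔸] [NormedAlgebra 𝕂 𝔸] [CompleteSpace 𝔸]

theorem exp_smul_of_isIdempotentElem {e : 𝔸} (he : IsIdempotentElem e) (t : 𝕂) :
    exp (t • e) = exp t • e + (1 - e) := by
  -- `(t • e) ^ n = t ^ n • e` except at `n = 0`, where the correction `1 - e` enters.
  have hterm : ∀ n : ℕ, (n ! : 𝕂)⁻¹ • (t • e) ^ n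
      = ((n ! : 𝕂)⁻¹ • t ^ n) • e + Pi.single (M := fun _ => 𝔸) 0 (1 - e) n := by
    rintro (_ | n)
    · simp
    · rw [smul_pow, he.pow_succ_eq, smul_smul, Pi.single_eq_of_ne n.succ_ne_zero, add_zero,
        smul_eq_mul]
  have hsum := ((exp_series_hasSum_exp' (𝕂 := 𝕂) t).smul_const e).add (hasSum_pi_single 0 (1 - e))
  exact (exp_series_hasSum_exp' (𝕂 := 𝕂) (t • e)).unique (by simpa only [hterm] using hsum)

theorem exp_smul_sub_one_of_mul_self_eq_one {P : 𝔸} (hP : P * P = 1) (t : 𝕂) :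
    exp (t • (P - 1)) = 1 + ((1 - exp (-2 * t)) / 2) • (P - 1) := by
  have he : IsIdempotentElem ((2⁻¹ : 𝕂) • (1 - P)) := by
    rw [IsIdempotentElem, smul_mul_smul_comm]
    simp only [sub_mul, mul_sub, one_mul, mul_one, hP]
    module
  have ht : t • (P - 1) = (-2 * t) • (2⁻¹ : 𝕂) • (1 - P) := by module
  rw [ht, exp_smul_of_isIdempotentElem he]
  module

end BanachAlgebra

section ContinuousLinearMap

variable {𝕜 E : Type*} [RCLike 𝕜] [NormedAddCommGroup E] [NormedSpace 𝕜 E]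

theorem eq_smul_sub_one_of_apply_eq {S T : E →L[𝕜] E} {t : 𝕜} (hT : ∀ x, T x = t • (S x - x)) :
    T = t • (S - 1) :=
  ContinuousLinearMap.ext fun x => by simp [hT]

theorem commute_of_apply_eq_smul_sub {S S' T T' : E →L[𝕜] E} (hS : Commute S S') {t t' : 𝕜}
    (hT : ∀ x, T x = t • (S x - x)) (hT' : ∀ x, T' x = t' • (S' x - x)) : Commute T T' := by
  rw [eq_smul_sub_one_of_apply_eq hT, eq_smul_sub_one_of_apply_eq hT']
  exact ((hS.sub_right (.one_right _)).sub_left (.one_left _)).smul_left _ |>.smul_right _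

variable [CompleteSpace E]

theorem exp_apply_eq_of_mul_self_eq_one {S T : E →L[𝕜] E} (hS : S * S = 1) {t : 𝕜}
    (hT : ∀ x, T x = t • (S x - x)) (x : E) :
    exp T x = x + ((1 - exp (-2 * t)) / 2) • (S x - x) := by
  rw [eq_smul_sub_one_of_apply_eq hT, exp_smul_sub_one_of_mul_self_eq_one hS]
  simp

theorem exp_list_sum_map_apply {ι : Type*} (T : ι → E →L[𝕜] E) (l : List ι)
    (hl : l.Pairwise fun i j => Commute (T i) (T j)) (x : E) :
    exp (l.map T).sum x = l.foldl (fun y i => exp (T i) y) x := by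
  let +nondep : NormedAlgebra ℚ (E →L[𝕜] E) := .restrictScalars ℚ 𝕜 _
  induction l generalizing x with
  | nil => simp
  | cons i l ih =>
    obtain ⟨hi, hl⟩ := List.pairwise_cons.mp hl
    have hcomm : Commute (l.map T).sum (T i) :=
      (Commute.list_sum_right _ _ (List.forall_mem_map.mpr hi)).symm
    rw [List.map_cons, List.sum_cons, add_comm, exp_add_of_commute hcomm, mul_apply_eq_comp, ih hl,
      List.foldl_cons]

end ContinuousLinearMap

namespace Matrix

variable {n : Type*} [Fintype n] [DecidableEq n]

noncomputable def sandwich (Q : Matrix n n ℂ) : Matrix n n ℂ →L[ℂ] Matrix n n ℂ :=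
  LinearMap.toContinuousLinearMap (LinearMap.mulLeftRight ℂ (Q, Q))

@[simp]
theorem sandwich_apply (Q A : Matrix n n ℂ) : sandwich Q A = Q * A * Q := rfl

theorem sandwich_mul_self {Q : Matrix n n ℂ} (hQ : Q * Q = 1) : sandwich Q * sandwich Q = 1 := by
  ext1 A
  simp only [mul_apply_eq_comp, sandwich_apply, one_apply_eq_self]
  rw [← mul_assoc, ← mul_assoc, hQ, one_mul, mul_assoc, hQ, mul_one]

theorem commute_sandwich {Q R : Matrix n n ℂ} (h : Q * R = R * Q ∨ Q * R = -(R * Q)) :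
    Commute (sandwich Q) (sandwich R) := by
  ext1 A
  simp only [mul_apply_eq_comp, sandwich_apply]
  calc Q * (R * A * R) * Q = Q * R * A * (R * Q) := by noncomm_ring
    _ = R * Q * A * (Q * R) := by rcases h with h | h <;> simp [h]
    _ = R * (Q * A * Q) * R := by noncomm_ring

end Matrix

theorem exp_sum_pauli_lindblad_general (d J : ℕ) (Q : Fin J → Matrix (Fin d) (Fin d) ℂ)
    (hQ_unit : ∀ j, Q j * Q j = 1)
    (hQ_comm : ∀ i j, Q i * Q j = Q j * Q i ∨ Q i * Q j = -(Q j * Q i))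
    (lam : Fin J → ℝ)
    (L : Fin J → (Matrix (Fin d) (Fin d) ℂ →L[ℂ] Matrix (Fin d) (Fin d) ℂ))
    (hL : ∀ j A, L j A = (lam j : ℂ) • (Q j * A * Q j - A))
    (p : Fin J → ℝ) (hp : ∀ j, p j = (1 - Real.exp (-2 * lam j)) / 2)
    (N : Fin J → (Matrix (Fin d) (Fin d) ℂ → Matrix (Fin d) (Fin d) ℂ))
    (hN : ∀ j A, N j A = (1 - (p j : ℂ)) • A + (p j : ℂ) • (Q j * A * Q j)) :
    ∀ A, (NormedSpace.exp (∑ j, L j)) A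
      = (List.finRange J).foldl (fun B j => N j B) A := by
  have hexp : ∀ j A, exp (L j) A = N j A := fun j A => by
    refine (exp_apply_eq_of_mul_self_eq_one (sandwich_mul_self (hQ_unit j)) (hL j) A).trans ?_
    rw [hN, hp, ← Complex.exp_eq_exp_ℂ]
    change A + _ • (Q j * A * Q j - A) = _
    push_cast
    module
  have hcomm : ∀ i j, Commute (L i) (L j) := fun i j =>
    commute_of_apply_eq_smul_sub (commute_sandwich (hQ_comm i j)) (hL i) (hL j)
  intro A
  refine (exp_list_sum_map_apply L _ (List.pairwise_of_forall hcomm) A).trans ?_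
  exact congrArg (List.foldl · A _) (funext₂ fun B j => hexp j B)

/-- **Exponential of a sum of commuting Pauli-Lindblad generators factorizes into
Pauli channels.**  Let `Q 1, …, Q J` be Hermitian unitary `d×d` complex matrices
which pairwise commute or anticommute, `λ j ≥ 0`, and let `L j` be the continuous
linear endomorphism `A ↦ λ j (Q j A Q j − A)`.  Then `exp (∑ j, L j)` equals the
composition `N J ∘ ⋯ ∘ N 1`, where `N j A = (1 − p j) A + p j Q j A Q j` and
`p j = (1 − e^{−2 λ j})/2`. -/
theorem exp_sum_pauli_lindblad (d J : ℕ) (Q : Fin J → Matrix (Fin d) (Fin d) ℂ)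
    (hQ_herm : ∀ j, (Q j)ᴴ = Q j) (hQ_unit : ∀ j, Q j * Q j = 1)
    (hQ_comm : ∀ i j, Q i * Q j = Q j * Q i ∨ Q i * Q j = -(Q j * Q i))
    (lam : Fin J → ℝ) (hlam : ∀ j, 0 ≤ lam j)
    (L : Fin J → (Matrix (Fin d) (Fin d) ℂ →L[ℂ] Matrix (Fin d) (Fin d) ℂ))
    (hL : ∀ j A, L j A = (lam j : ℂ) • (Q j * A * Q j - A))
    (p : Fin J → ℝ) (hp : ∀ j, p j = (1 - Real.exp (-2 * lam j)) / 2)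
    (N : Fin J → (Matrix (Fin d) (Fin d) ℂ → Matrix (Fin d) (Fin d) ℂ))
    (hN : ∀ j A, N j A = (1 - (p j : ℂ)) • A + (p j : ℂ) • (Q j * A * Q j)) :
    ∀ A, (NormedSpace.exp (∑ j, L j)) A
      = (List.finRange J).foldl (fun B j => N j B) A :=
  exp_sum_pauli_lindblad_general d J Q hQ_unit hQ_comm lam L hL p hp N hN
end

section
/- Let Q_1, …, Q_N be d×d Hermitian unitary complex matrices such that every pair Q_i, Q_j either commutes or anticommutes, p_1, …, p_N ∈ [0, 1], ρ a density matrix, and O a d×d complex matrix with ‖O‖ ≤ 1. Let μ ⊆ {1, …, N} and suppose Q_i O Q_i = O for every i ∉ μ. For g ∈ ℝ define f(g) = Tr(ρ · (N_N^{(g)} ∘ ⋯ ∘ N_1^{(g)})(O)) with N_i^{(g)}(A) = (1 − g p_i) A + g p_i Q_i A Q_i. Let K ≥ 0 with K + 1 ≤ N, let g_0, …, g_K be pairwise distinct positive reals, and let β_ℓ = ∏_{m ≠ ℓ} g_m / (g_m − g_ℓ). Then |∑_{ℓ=0}^{K} β_ℓ f(g_ℓ) − Tr(ρ O)| ≤ ∑_{k=K+1}^{N}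 2^k · |∑_{ℓ=0}^{K} β_ℓ g_ℓ^k| · e_k(p̃_1, …, p̃_N), where p̃_i = p_i if i ∈ μ and p̃_i = 0 otherwise, and e_k denotes the elementary symmetric polynomial of degree k. -/
open Matrix
open scoped Matrix.Norms.L2Operator ComplexOrder

/-!
Conjugations by two Pauli strings that commute or anticommute commute with each other, so every
channel maps a matrix fixed by the conjugations outside the light cone to another such matrix;
on those matrices the channels outside the light cone are the identity, and `p` may be replaced
by `p̃`. Writing each channel as `A ↦ A + x p̃ᵢ (Qᵢ A Qᵢ - A)`, the noisy observable becomes a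
polynomial of degree at most `N` in the gain `x` with matrix coefficients `C k`, where `C 0 = O`
and `‖C k‖ ≤ 2 ^ k e_k(p̃)`, because conjugation by a unitary preserves the operator norm. The
Richardson weights are the values at `0` of the Lagrange basis for the nodes `g`, so they
reproduce `x ^ k` exactly for `k ≤ K`: only the coefficients of degree `k > K` enter the
extrapolation error, and `|Tr (ρ C)| ≤ ‖C‖` for a density matrix `ρ`.
-/

namespace Matrix

variable {n : Type*} [Fintype n] [DecidableEq n]

lemma norm_star_dotProduct_mulVec_le (A : Matrix n n ℂ) (v : n → ℂ) :
    ‖star v ⬝ᵥ (A *ᵥ v)‖ ≤ ‖A‖ * ‖WithLp.toLp 2 v‖ ^ 2 := by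
  have hinner : star v ⬝ᵥ (A *ᵥ v) = inner ℂ (WithLp.toLp 2 v) (WithLp.toLp 2 (A *ᵥ v)) := by
    rw [EuclideanSpace.inner_eq_star_dotProduct, dotProduct_comm]
  calc ‖star v ⬝ᵥ (A *ᵥ v)‖
      ≤ ‖WithLp.toLp 2 v‖ * ‖WithLp.toLp 2 (A *ᵥ v)‖ := hinner ▸ norm_inner_le_norm _ _
    _ ≤ ‖WithLp.toLp 2 v‖ * (‖A‖ * ‖WithLp.toLp 2 v‖) := by
      gcongr; exact A.l2_opNorm_mulVec _
    _ = ‖A‖ * ‖WithLp.toLp 2 v‖ ^ 2 := by ring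

lemma PosSemidef.norm_trace_mul_le {ρ : Matrix n n ℂ} (hρ : ρ.PosSemidef) (A : Matrix n n ℂ) :
    ‖(ρ * A).trace‖ ≤ ‖A‖ * ρ.trace.re := by
  obtain ⟨m, v, rfl⟩ := posSemidef_iff_eq_sum_vecMulVec.mp hρ
  have hterm : ∀ i, (vecMulVec (v i) (star (v i)) * A).trace = star (v i) ⬝ᵥ (A *ᵥ v i) := by
    intro i
    rw [vecMulVec_mul, trace_vecMulVec, dotProduct_comm, dotProduct_mulVec]
  have hnorm : ∀ i, (vecMulVec (v i) (star (v i))).trace.re = ‖WithLp.toLp 2 (v i)‖ ^ 2 := by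
    intro i
    rw [trace_vecMulVec, ← inner_self_eq_norm_sq (𝕜 := ℂ)]
    rfl
  simp only [Finset.sum_mul, trace_sum, Complex.re_sum, hterm, hnorm, Finset.mul_sum]
  exact (norm_sum_le _ _).trans
    (Finset.sum_le_sum fun i _ => norm_star_dotProduct_mulVec_le A (v i))

end Matrix

theorem IsSelfAdjoint.mem_unitary_of_mul_self_eq_one {R : Type*} [Monoid R] [StarMul R] {u : R}
    (hu : IsSelfAdjoint u) (h : u * u = 1) : u ∈ unitary R :=
  Unitary.mem_iff.mpr ⟨by rw [hu.star_eq, h], by rw [hu.star_eq, h]⟩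

theorem conj_conj_comm_of_commute_or_anticommute {R : Type*} [Ring R] {a b : R}
    (hab : a * b = b * a ∨ a * b = -(b * a)) (x : R) :
    b * (a * x * a) * b = a * (b * x * b) * a := by
  have hba : b * a * x * (a * b) = a * b * x * (b * a) := by
    rcases hab with h | h
    · rw [h]
    · rw [h]
      simp only [mul_neg, neg_mul]
  simpa only [mul_assoc] using hba

lemma Multiset.esymm_cons_succ {R : Type*} [CommSemiring R] (a : R) (s : Multiset R) (k : ℕ) :
    (a ::ₘ s).esymm (k + 1) = s.esymm (k + 1) + a * s.esymm k := by
  simp [Multiset.esymm, Multiset.powersetCard_cons, Multiset.sum_map_mul_left]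

lemma Polynomial.eval_algebraMap_eq_sum_range' {R A : Type*} [CommSemiring R] [Semiring A]
    [Algebra R A] {P : Polynomial A} {m : ℕ} (hP : P.natDegree < m) (x : R) :
    P.eval (algebraMap R A x) = ∑ k ∈ Finset.range m, x ^ k • P.coeff k := by
  rw [Polynomial.eval_eq_sum_range' hP]
  refine Finset.sum_congr rfl fun k _ => ?_
  rw [← map_pow, ← Algebra.commutes, ← Algebra.smul_def]

section PauliChannel

variable {n ι : Type*} [Fintype n]

noncomputable def pauliChannel (Q : Matrix n n ℂ) (r : ℝ) (A : Matrix n n ℂ) : Matrix n n ℂ :=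
  (1 - r) • A + (r : ℂ) • (Q * A * Q)

noncomputable def pauliNoise (Q : ι → Matrix n n ℂ) (r : ι → ℝ) (L : List ι)
    (A : Matrix n n ℂ) : Matrix n n ℂ :=
  L.foldl (fun A i => pauliChannel (Q i) (r i) A) A

lemma pauliChannel_eq_add_smul (Q : Matrix n n ℂ) (r : ℝ) (A : Matrix n n ℂ) :
    pauliChannel Q r A = A + (r : ℂ) • (Q * A * Q - A) := by
  rw [pauliChannel, ← Complex.coe_smul, Complex.ofReal_sub, Complex.ofReal_one, sub_smul,
    one_smul, smul_sub]
  abel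

lemma pauliChannel_of_conj_eq {Q A : Matrix n n ℂ} (h : Q * A * Q = A) (r : ℝ) :
    pauliChannel Q r A = A := by
  rw [pauliChannel_eq_add_smul, h, sub_self, smul_zero, add_zero]

variable [DecidableEq n]

lemma conj_pauliChannel_of_conj_eq {Q Q' A : Matrix n n ℂ}
    (hQQ' : Q * Q' = Q' * Q ∨ Q * Q' = -(Q' * Q)) (hA : Q' * A * Q' = A) (r : ℝ) :
    Q' * pauliChannel Q r A * Q' = pauliChannel Q r A := by
  simp only [pauliChannel, Matrix.mul_add, Matrix.add_mul, mul_smul_comm, smul_mul_assoc,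
    conj_conj_comm_of_commute_or_anticommute hQQ', hA]

lemma pauliNoise_congr_of_conj_eq {Q : ι → Matrix n n ℂ}
    (hQ : ∀ i j, Q i * Q j = Q j * Q i ∨ Q i * Q j = -(Q j * Q i)) {μ : Finset ι}
    {r r' : ι → ℝ} (hr : ∀ i ∈ μ, r i = r' i) (L : List ι) {A : Matrix n n ℂ}
    (hA : ∀ j ∉ μ, Q j * A * Q j = A) :
    pauliNoise Q r L A = pauliNoise Q r' L A := by
  induction L generalizing A with
  | nil => rfl
  | cons i L ih =>
    have hstep : pauliChannel (Q i) (r i) A = pauliChannel (Q i) (r' i) A := by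
      by_cases hi : i ∈ μ
      · rw [hr i hi]
      · rw [pauliChannel_of_conj_eq (hA i hi), pauliChannel_of_conj_eq (hA i hi)]
    simp only [pauliNoise, List.foldl_cons]
    rw [hstep]
    exact ih fun j hj => conj_pauliChannel_of_conj_eq (hQ i j) (hA j hj) _

end PauliChannel

section GainPolynomial

open Polynomial

variable {n ι : Type*} [Fintype n] [DecidableEq n]

noncomputable def pauliChannelPoly (Q : Matrix n n ℂ) (q : ℝ) (P : (Matrix n n ℂ)[X]) :
    (Matrix n n ℂ)[X] :=
  P + (q : ℂ) • ((C Q * P * C Q - P) * X)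

noncomputable def pauliNoisePoly (Q : ι → Matrix n n ℂ) (q : ι → ℝ) (L : List ι)
    (P : (Matrix n n ℂ)[X]) : (Matrix n n ℂ)[X] :=
  L.foldl (fun P i => pauliChannelPoly (Q i) (q i) P) P

lemma eval_pauliChannelPoly (Q : Matrix n n ℂ) (q x : ℝ) (P : (Matrix n n ℂ)[X]) :
    (pauliChannelPoly Q q P).eval (algebraMap ℂ _ x) =
      pauliChannel Q (x * q) (P.eval (algebraMap ℂ _ x)) := by
  rw [pauliChannelPoly, pauliChannel_eq_add_smul, eval_add, eval_smul, eval_mul_X, eval_sub,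
    eval_mul_C_of_commute (Algebra.commutes _ _).symm, eval_C_mul, ← Algebra.commutes,
    ← Algebra.smul_def, smul_smul, Complex.ofReal_mul, mul_comm (q : ℂ)]

lemma coeff_pauliChannelPoly_zero (Q : Matrix n n ℂ) (q : ℝ) (P : (Matrix n n ℂ)[X]) :
    (pauliChannelPoly Q q P).coeff 0 = P.coeff 0 := by
  simp [pauliChannelPoly]

lemma coeff_pauliChannelPoly_succ (Q : Matrix n n ℂ) (q : ℝ) (P : (Matrix n n ℂ)[X])
    (k : ℕ) : (pauliChannelPoly Q q P).coeff (k + 1) =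
      P.coeff (k + 1) + (q : ℂ) • (Q * P.coeff k * Q - P.coeff k) := by
  simp [pauliChannelPoly, coeff_mul_X, coeff_C_mul, coeff_mul_C]

lemma natDegree_pauliChannelPoly_le (Q : Matrix n n ℂ) (q : ℝ) (P : (Matrix n n ℂ)[X]) :
    (pauliChannelPoly Q q P).natDegree ≤ P.natDegree + 1 := by
  have hconj : (C Q * P * C Q - P).natDegree ≤ P.natDegree :=
    (natDegree_sub_le _ _).trans <| max_le
      ((natDegree_mul_C_le _ _).trans (natDegree_C_mul_le _ _)) le_rfl
  have hshift : ((C Q * P * C Q - P) * X).natDegree ≤ P.natDegree + 1 :=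
    natDegree_mul_le.trans (add_le_add hconj natDegree_X_le)
  exact (natDegree_add_le _ _).trans <| max_le (Nat.le_succ _) <|
    (natDegree_smul_le _ _).trans hshift

lemma norm_coeff_pauliChannelPoly_le {Q : Matrix n n ℂ} (hQ : Q ∈ unitary (Matrix n n ℂ))
    {q : ℝ} (hq : 0 ≤ q) {P : (Matrix n n ℂ)[X]} {s : Multiset ℝ}
    (hP : ∀ k, ‖P.coeff k‖ ≤ 2 ^ k * s.esymm k) (k : ℕ) :
    ‖(pauliChannelPoly Q q P).coeff k‖ ≤ 2 ^ k * (q ::ₘ s).esymm k := by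
  cases k with
  | zero => simpa [coeff_pauliChannelPoly_zero, Multiset.esymm] using hP 0
  | succ k =>
    have hconj : ‖Q * P.coeff k * Q‖ = ‖P.coeff k‖ := by
      rw [CStarRing.norm_mul_mem_unitary _ hQ, CStarRing.norm_mem_unitary_mul _ hQ]
    calc ‖(pauliChannelPoly Q q P).coeff (k + 1)‖
        ≤ ‖P.coeff (k + 1)‖ + q * (‖Q * P.coeff k * Q‖ + ‖P.coeff k‖) := by
          rw [coeff_pauliChannelPoly_succ]
          refine (norm_add_le _ _).trans (add_le_add le_rfl ?_)
          rw [norm_smul, Complex.norm_real, Real.norm_of_nonneg hq]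
          exact mul_le_mul_of_nonneg_left (norm_sub_le _ _) hq
      _ ≤ 2 ^ (k + 1) * s.esymm (k + 1) + q * (2 * (2 ^ k * s.esymm k)) := by
          rw [hconj, ← two_mul]
          gcongr
          exacts [hP _, hP _]
      _ = 2 ^ (k + 1) * (q ::ₘ s).esymm (k + 1) := by
          rw [Multiset.esymm_cons_succ]
          ring

lemma norm_coeff_pauliNoisePoly_le {Q : ι → Matrix n n ℂ}
    (hQ : ∀ i, Q i ∈ unitary (Matrix n n ℂ)) {q : ι → ℝ} (hq : ∀ i, 0 ≤ q i) (L : List ι)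
    {P : (Matrix n n ℂ)[X]} {s : Multiset ℝ} (hP : ∀ k, ‖P.coeff k‖ ≤ 2 ^ k * s.esymm k)
    (k : ℕ) : ‖(pauliNoisePoly Q q L P).coeff k‖ ≤ 2 ^ k * (s + ↑(L.map q)).esymm k := by
  induction L generalizing P s with
  | nil => simpa [pauliNoisePoly] using hP k
  | cons i L ih =>
    simpa [pauliNoisePoly, Multiset.cons_add, ← Multiset.cons_coe] using
      ih (norm_coeff_pauliChannelPoly_le (hQ i) (hq i) hP)

lemma norm_coeff_pauliNoisePoly_C_le {Q : ι → Matrix n n ℂ}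
    (hQ : ∀ i, Q i ∈ unitary (Matrix n n ℂ)) {q : ι → ℝ} (hq : ∀ i, 0 ≤ q i) (L : List ι)
    {A : Matrix n n ℂ} (hA : ‖A‖ ≤ 1) (k : ℕ) :
    ‖(pauliNoisePoly Q q L (C A)).coeff k‖ ≤ 2 ^ k * (↑(L.map q) : Multiset ℝ).esymm k := by
  have hC : ∀ k, ‖(C A).coeff k‖ ≤ 2 ^ k * (0 : Multiset ℝ).esymm k := by
    rintro (_ | k) <;> simp [coeff_C, Multiset.esymm, Multiset.powersetCard_zero_right, hA]
  simpa using norm_coeff_pauliNoisePoly_le hQ hq L hC k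

lemma coeff_pauliNoisePoly_zero (Q : ι → Matrix n n ℂ) (q : ι → ℝ) (L : List ι)
    (P : (Matrix n n ℂ)[X]) : (pauliNoisePoly Q q L P).coeff 0 = P.coeff 0 := by
  induction L generalizing P with
  | nil => rfl
  | cons i L ih => exact (ih _).trans (coeff_pauliChannelPoly_zero _ _ _)

lemma natDegree_pauliNoisePoly_le (Q : ι → Matrix n n ℂ) (q : ι → ℝ) (L : List ι)
    (P : (Matrix n n ℂ)[X]) :
    (pauliNoisePoly Q q L P).natDegree ≤ P.natDegree + L.length := by
  induction L generalizing P with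
  | nil => rfl
  | cons i L ih =>
    have := natDegree_pauliChannelPoly_le (Q i) (q i) P
    exact (ih _).trans (by simp only [List.length_cons]; omega)

lemma eval_pauliNoisePoly (Q : ι → Matrix n n ℂ) (q : ι → ℝ) (L : List ι) (x : ℝ)
    (A : Matrix n n ℂ) :
    (pauliNoisePoly Q q L (C A)).eval (algebraMap ℂ _ x) =
      pauliNoise Q (fun i => x * q i) L A := by
  have h := List.foldl_hom (l := L) (fun P => P.eval (algebraMap ℂ _ (x : ℂ))) (init := C A)
    (g₁ := fun P i => pauliChannelPoly (Q i) (q i) P)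
    (g₂ := fun A i => pauliChannel (Q i) (x * q i) A)
    fun P i => (eval_pauliChannelPoly (Q i) (q i) x P).symm
  rw [eval_C] at h
  exact h.symm

lemma trace_mul_pauliNoise_eq_sum (ρ A : Matrix n n ℂ) (Q : ι → Matrix n n ℂ) (q : ι → ℝ)
    (L : List ι) (x : ℝ) :
    (ρ * pauliNoise Q (fun i => x * q i) L A).trace =
      ∑ k ∈ Finset.range (L.length + 1),
        (x : ℂ) ^ k * (ρ * (pauliNoisePoly Q q L (C A)).coeff k).trace := by
  have hdeg : (pauliNoisePoly Q q L (C A)).natDegree < L.length + 1 :=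
    (natDegree_pauliNoisePoly_le _ _ _ _).trans_lt (by simp)
  rw [← eval_pauliNoisePoly, eval_algebraMap_eq_sum_range' hdeg, Matrix.mul_sum, trace_sum]
  simp_rw [Matrix.mul_smul, trace_smul, smul_eq_mul]

end GainPolynomial

section Richardson

open Finset Polynomial

lemma sum_lagrange_weight_mul_pow {ι : Type*} [Fintype ι] [DecidableEq ι] {g : ι → ℝ}
    (hg : Function.Injective g) {k : ℕ} (hk : k < Fintype.card ι) :
    ∑ ℓ, (∏ m ∈ univ.erase ℓ, g m / (g m - g ℓ)) * g ℓ ^ k = 0 ^ k := by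
  have hinterp := Lagrange.eq_interpolate (s := univ) hg.injOn (f := X ^ k)
    (by rw [degree_X_pow, card_univ]; exact_mod_cast hk)
  have hbasis : ∀ ℓ,
      (Lagrange.basis univ g ℓ).eval 0 = ∏ m ∈ univ.erase ℓ, g m / (g m - g ℓ) := by
    intro ℓ
    rw [Lagrange.basis, eval_prod]
    refine prod_congr rfl fun m hm => ?_
    have hne : g m - g ℓ ≠ 0 := sub_ne_zero.mpr (hg.ne (ne_of_mem_erase hm))
    have hne' : g ℓ - g m ≠ 0 := sub_ne_zero.mpr (hg.ne (ne_of_mem_erase hm).symm)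
    simp only [Lagrange.basisDivisor, eval_mul, eval_C, eval_sub, eval_X]
    field_simp
    ring
  have h0 := congrArg (eval 0) hinterp
  simp only [Lagrange.interpolate_apply, eval_finsetSum, eval_mul, eval_C, eval_pow, eval_X,
    hbasis] at h0
  rw [h0]
  exact sum_congr rfl fun ℓ _ => mul_comm _ _

variable {ι : Type*} [Fintype ι] {β g : ι → ℝ} {K : ℕ}

lemma richardson_sub_eq_sum_Icc (hexact : ∀ k ≤ K, ∑ ℓ, β ℓ * g ℓ ^ k = 0 ^ k) (N : ℕ)
    (c : ℕ → ℂ) :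
    ∑ ℓ, (β ℓ : ℂ) * ∑ k ∈ range (N + 1), (g ℓ : ℂ) ^ k * c k - c 0 =
      ∑ k ∈ Icc (K + 1) N, ((∑ ℓ, β ℓ * g ℓ ^ k : ℝ) : ℂ) * c k := by
  have hswap : ∑ ℓ, (β ℓ : ℂ) * ∑ k ∈ range (N + 1), (g ℓ : ℂ) ^ k * c k =
      ∑ k ∈ range (N + 1), ((∑ ℓ, β ℓ * g ℓ ^ k : ℝ) : ℂ) * c k := by
    simp_rw [mul_sum]
    rw [sum_comm]
    refine sum_congr rfl fun k _ => ?_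
    push_cast
    rw [sum_mul]
    exact sum_congr rfl fun ℓ _ => by ring
  have hc0 : c 0 = ∑ k ∈ range (N + 1), (((0 : ℝ) ^ k : ℝ) : ℂ) * c k := by
    simp [sum_range_succ']
  rw [hswap, hc0, ← sum_sub_distrib]
  symm
  refine sum_subset_zero_on_sdiff (fun k hk => ?_) (fun k hk => ?_) (fun k hk => ?_)
  · simp only [mem_Icc, mem_range] at hk ⊢; omega
  · simp only [mem_sdiff, mem_Icc, mem_range] at hk
    rw [hexact k (by omega), ← sub_mul, sub_self, zero_mul]
  · rw [zero_pow (by simp only [mem_Icc] at hk; omega)]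
    simp

lemma norm_richardson_sub_le (hexact : ∀ k ≤ K, ∑ ℓ, β ℓ * g ℓ ^ k = 0 ^ k) (N : ℕ)
    {c : ℕ → ℂ} {b : ℕ → ℝ} (hc : ∀ k, ‖c k‖ ≤ b k) :
    ‖∑ ℓ, (β ℓ : ℂ) * ∑ k ∈ range (N + 1), (g ℓ : ℂ) ^ k * c k - c 0‖ ≤
      ∑ k ∈ Icc (K + 1) N, |∑ ℓ, β ℓ * g ℓ ^ k| * b k := by
  rw [richardson_sub_eq_sum_Icc hexact]
  refine (norm_sum_le _ _).trans (sum_le_sum fun k _ => ?_)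
  rw [norm_mul, Complex.norm_real, Real.norm_eq_abs]
  exact mul_le_mul_of_nonneg_left (hc k) (abs_nonneg _)

end Richardson

theorem zne_lightcone_error_bound_general (d N K : ℕ)
    (Q : Fin N → Matrix (Fin d) (Fin d) ℂ)
    (hQ_herm : ∀ i, (Q i)ᴴ = Q i) (hQ_unit : ∀ i, Q i * Q i = 1)
    (hQ_comm : ∀ i j, Q i * Q j = Q j * Q i ∨ Q i * Q j = -(Q j * Q i))
    (p : Fin N → ℝ) (hp : ∀ i, p i ∈ Set.Icc (0 : ℝ) 1)
    (ρ O : Matrix (Fin d) (Fin d) ℂ)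
    (hρ : ρ.PosSemidef) (hρ_tr : ρ.trace = 1) (hO : ‖O‖ ≤ 1)
    (μ : Finset (Fin N)) (hμ : ∀ i ∉ μ, Q i * O * Q i = O)
    (g : Fin (K + 1) → ℝ) (hg_inj : Function.Injective g)
    (β : Fin (K + 1) → ℝ)
    (hβ : ∀ ℓ, β ℓ = ∏ m ∈ Finset.univ.erase ℓ, g m / (g m - g ℓ))
    (f : ℝ → ℂ)
    (hf : ∀ x : ℝ, f x = (ρ * (List.finRange N).foldl
        (fun A i => (1 - (x * p i : ℝ)) • A + ((x * p i : ℝ) : ℂ) • (Q i * A * Q i)) O).trace)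
    (ptilde : Fin N → ℝ) (hptilde : ∀ i, ptilde i = if i ∈ μ then p i else 0) :
    ‖(∑ ℓ, (β ℓ : ℂ) * f (g ℓ)) - (ρ * O).trace‖
      ≤ ∑ k ∈ Finset.Icc (K + 1) N,
          2 ^ k * |∑ ℓ, β ℓ * g ℓ ^ k| *
            ∑ S ∈ Finset.univ.powersetCard k, ∏ i ∈ S, ptilde i := by
  have hQ : ∀ i, Q i ∈ unitary (Matrix (Fin d) (Fin d) ℂ) := fun i =>
    IsSelfAdjoint.mem_unitary_of_mul_self_eq_one (hQ_herm i) (hQ_unit i)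
  have hptilde_nonneg : ∀ i, 0 ≤ ptilde i := fun i => by
    rw [hptilde]; split_ifs
    exacts [(hp i).1, le_rfl]
  set F := pauliNoisePoly Q ptilde (List.finRange N) (Polynomial.C O)
  have hf_eq : ∀ x : ℝ,
      f x = ∑ k ∈ Finset.range (N + 1), (x : ℂ) ^ k * (ρ * F.coeff k).trace := fun x => by
    have hlight := pauliNoise_congr_of_conj_eq hQ_comm (r := fun i => x * p i)
      (r' := fun i => x * ptilde i) (fun i hi => by rw [hptilde, if_pos hi])
      (List.finRange N) hμ
    calc f x = (ρ * pauliNoise Q (fun i => x * ptilde i) (List.finRange N) O).trace := by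
          rw [← hlight]; exact hf x
      _ = _ := by rw [trace_mul_pauliNoise_eq_sum, List.length_finRange]
  have hcoeff : ∀ k, ‖(ρ * F.coeff k).trace‖ ≤
      2 ^ k * ∑ S ∈ Finset.univ.powersetCard k, ∏ i ∈ S, ptilde i := fun k => by
    have hF := norm_coeff_pauliNoisePoly_C_le hQ hptilde_nonneg (List.finRange N) hO k
    rw [← List.ofFn_eq_map, ← Fin.univ_val_map, Finset.esymm_map_val] at hF
    have hρF : ‖(ρ * F.coeff k).trace‖ ≤ ‖F.coeff k‖ := by
      simpa [hρ_tr] using hρ.norm_trace_mul_le (F.coeff k)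
    exact hρF.trans hF
  have hexact : ∀ k ≤ K, ∑ ℓ, β ℓ * g ℓ ^ k = 0 ^ k := fun k hk => by
    simp_rw [hβ]
    exact sum_lagrange_weight_mul_pow hg_inj (by simpa using Nat.lt_succ_of_le hk)
  have hF0 : F.coeff 0 = O := by
    rw [coeff_pauliNoisePoly_zero, Polynomial.coeff_C_zero]
  simp_rw [hf_eq, ← hF0]
  refine (norm_richardson_sub_le hexact N hcoeff).trans (le_of_eq ?_)
  exact Finset.sum_congr rfl fun k _ => by ring

/-- **Light-cone zero-noise extrapolation error bound.**
Same setting as the standard ZNE bound, with additionally: the `Q i` pairwise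
commute or anticommute, `μ ⊆ {1, …, N}`, and `Q i O Q i = O` for every `i ∉ μ`
(noise channels outside the light cone act trivially on `O`).  Then the ZNE
remainder is bounded using only the error probabilities inside the light cone:
`|∑ ℓ, β ℓ f (g ℓ) − Tr(ρ O)| ≤ ∑_{k=K+1}^{N} 2^k |∑ ℓ, β ℓ (g ℓ)^k| e_k(p̃)`,
where `p̃ i = p i` for `i ∈ μ` and `p̃ i = 0` otherwise. -/
theorem zne_lightcone_error_bound (d N K : ℕ) (hKN : K + 1 ≤ N)
    (Q : Fin N → Matrix (Fin d) (Fin d) ℂ)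
    (hQ_herm : ∀ i, (Q i)ᴴ = Q i) (hQ_unit : ∀ i, Q i * Q i = 1)
    (hQ_comm : ∀ i j, Q i * Q j = Q j * Q i ∨ Q i * Q j = -(Q j * Q i))
    (p : Fin N → ℝ) (hp : ∀ i, p i ∈ Set.Icc (0 : ℝ) 1)
    (ρ O : Matrix (Fin d) (Fin d) ℂ)
    (hρ : ρ.PosSemidef) (hρ_tr : ρ.trace = 1) (hO : ‖O‖ ≤ 1)
    (μ : Finset (Fin N)) (hμ : ∀ i ∉ μ, Q i * O * Q i = O)
    (g : Fin (K + 1) → ℝ) (hg_inj : Function.Injective g) (hg_pos : ∀ ℓ, 0 < g ℓ)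
    (β : Fin (K + 1) → ℝ)
    (hβ : ∀ ℓ, β ℓ = ∏ m ∈ Finset.univ.erase ℓ, g m / (g m - g ℓ))
    (f : ℝ → ℂ)
    (hf : ∀ x : ℝ, f x = (ρ * (List.finRange N).foldl
        (fun A i => (1 - (x * p i : ℝ)) • A + ((x * p i : ℝ) : ℂ) • (Q i * A * Q i)) O).trace)
    (ptilde : Fin N → ℝ) (hptilde : ∀ i, ptilde i = if i ∈ μ then p i else 0) :
    ‖(∑ ℓ, (β ℓ : ℂ) * f (g ℓ)) - (ρ * O).trace‖
      ≤ ∑ k ∈ Finset.Icc (K + 1) N,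
          2 ^ k * |∑ ℓ, β ℓ * g ℓ ^ k| *
            ∑ S ∈ Finset.univ.powersetCard k, ∏ i ∈ S, ptilde i :=
  zne_lightcone_error_bound_general d N K Q hQ_herm hQ_unit hQ_comm p hp ρ O hρ hρ_tr hO μ hμ g
    hg_inj β hβ f hf ptilde hptilde
end
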